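/- arXiv:0810.2175 — 2 statements merged into one kernel-verified Lean document; each statement's English description precedes it below -/
import Mathlib

section
/- Let G be a finite simple graph on a vertex set V, and let P be a subset of the edge set of G such that in the subgraph (V, P) every vertex has degree at most 2. Let C be the set of vertices having degree at least 1 in (V, P). Then for every vertex cover C* of G, |C| ≤ 3·|C*|. -/
/-!
Every vertex of `C` outside the cover `C*` is joined by an edge of `P` to a vertex of `C*`
(the edge lies in `G`, so one of its ends is in `C*`). Each vertex of `C*` has at most two
`P`-neighbours, so `|C \ C*| ≤ 2 |C*|` and hence `|C| ≤ |C \ C*| + |C*| ≤ 3 |C*|`.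
-/

theorem Set.ncard_biUnion_le_mul {ι α : Type*} {t : Set ι} (ht : t.Finite) {s : ι → Set α}
    {n : ℕ} (hs : ∀ i ∈ t, (s i).ncard ≤ n) : (⋃ i ∈ t, s i).ncard ≤ n * t.ncard := by
  calc (⋃ i ∈ t, s i).ncard = (⋃ i ∈ ht.toFinset, s i).ncard := by simp
    _ ≤ ∑ i ∈ ht.toFinset, (s i).ncard := ht.toFinset.set_ncard_biUnion_le s
    _ ≤ ht.toFinset.card • n := Finset.sum_le_card_nsmul _ _ _ fun i hi => hs i (by simpa using hi)
    _ = n * t.ncard := by rw [smul_eq_mul, mul_comm, ← Set.ncard_eq_toFinset_card t ht]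

namespace SimpleGraph

variable {V : Type*} (G : SimpleGraph V)

theorem sdiff_cover_subset_biUnion {P : Set (Sym2 V)} (hP : P ⊆ G.edgeSet) {S : Set V}
    (hS : ∀ u v, G.Adj u v → u ∈ S ∨ v ∈ S) :
    {v | {u | s(v, u) ∈ P}.Nonempty} \ S ⊆ ⋃ w ∈ S, {u | s(w, u) ∈ P} := by
  rintro v ⟨⟨u, hvu⟩, hvS⟩
  have huS : u ∈ S := (hS v u (hP hvu)).resolve_left hvS
  exact Set.mem_biUnion huS (Sym2.eq_swap ▸ hvu : s(u, v) ∈ P)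

end SimpleGraph

/-- If `P` is a subset of the edge set of a finite simple graph `G` such
that in the subgraph `(V, P)` every vertex has degree at most 2, and `C` is the set of
vertices of degree at least 1 in `(V, P)`, then `|C| ≤ 3·|C*|` for every vertex cover
`C*` of `G`. -/
theorem ncard_nonisolated_le_three_mul_cover
    {V : Type*} [Fintype V] (G : SimpleGraph V)
    (P : Set (Sym2 V)) (hPsub : P ⊆ G.edgeSet)
    (hdeg : ∀ v : V, ({u : V | s(v, u) ∈ P}).ncard ≤ 2)
    (C : Set V)
    (hC : C = {v : V | 1 ≤ ({u : V | s(v, u) ∈ P}).ncard})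
    (Cstar : Set V)
    (hCstar : ∀ u v : V, G.Adj u v → u ∈ Cstar ∨ v ∈ Cstar) :
    C.ncard ≤ 3 * Cstar.ncard := by
  have hC_nonempty : C = {v | {u | s(v, u) ∈ P}.Nonempty} := by
    ext v
    rw [hC]
    exact Set.ncard_pos
  have houtside : (C \ Cstar).ncard ≤ 2 * Cstar.ncard := by
    rw [hC_nonempty]
    exact (Set.ncard_le_ncard (G.sdiff_cover_subset_biUnion hPsub hCstar)).trans
      (Set.ncard_biUnion_le_mul (Set.toFinite _) fun w _ => hdeg w)
  have hsplit := Set.ncard_le_ncard_sdiff_add_ncard C Cstar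
  omega
end

section
/- Let G be a finite simple graph on a vertex set V, let H be the bipartite double cover of G, and let M be a maximal matching of H. Define C to be the set of vertices v of G such that at least one of (v, true), (v, false) is matched by M. Then C is a vertex cover of G, and for every vertex cover C* of G one has |C| ≤ 3·|C*|; in particular |C| is at most 3 times the minimum size of a vertex cover of G. -/
lemma sym2_rep {α : Type*} (e : Sym2 α) : ∃ p q, e = s(p, q) := by
  induction e using Sym2.ind with
  | _ p q => exact ⟨p, q, rfl⟩

/-- If `H` is the bipartite double cover of a finite simple graph `G` and
`M` is a maximal matching of `H`, then the set `C` of vertices of `G` having a matched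
copy is a vertex cover of `G` of size at most 3 times that of any vertex cover of `G`. -/
theorem threeApprox_vertexCover_of_maximalMatching_doubleCover
    {V : Type*} [Fintype V] (G : SimpleGraph V)
    (H : SimpleGraph (V × Bool))
    (hH : ∀ p q : V × Bool, H.Adj p q ↔ G.Adj p.1 q.1 ∧ p.2 ≠ q.2)
    (M : Set (Sym2 (V × Bool)))
    (hMsub : M ⊆ H.edgeSet)
    (hMatch : ∀ e ∈ M, ∀ f ∈ M, e ≠ f → ∀ p : V × Bool, p ∈ e → p ∉ f)
    (hMax : ∀ e ∈ H.edgeSet, ∃ f ∈ M, ∃ p : V × Bool, p ∈ e ∧ p ∈ f)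
    (C : Set V)
    (hC : C = {v : V | ∃ e ∈ M, (v, true) ∈ e ∨ (v, false) ∈ e}) :
    (∀ u v : V, G.Adj u v → u ∈ C ∨ v ∈ C) ∧
    (∀ Cstar : Set V, (∀ u v : V, G.Adj u v → u ∈ Cstar ∨ v ∈ Cstar) →
      C.ncard ≤ 3 * Cstar.ncard) := by
  classical
  subst hC
  set C : Set V := {v : V | ∃ e ∈ M, (v, true) ∈ e ∨ (v, false) ∈ e} with hCdef
  constructor
  · intro u v huv
    have he : s(((u, true) : V × Bool), (v, false)) ∈ H.edgeSet := by
      rw [SimpleGraph.mem_edgeSet, hH]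
      exact ⟨huv, by simp⟩
    obtain ⟨f, hf, p, hpe, hpf⟩ := hMax _ he
    rw [Sym2.mem_iff] at hpe
    rcases hpe with rfl | rfl
    · exact Or.inl ⟨f, hf, Or.inl hpf⟩
    · exact Or.inr ⟨f, hf, Or.inr hpf⟩
  · intro Cstar hCstar
    -- key: each vertex of C \ Cstar can be sent to a matched copy of a Cstar vertex
    have key : ∀ w : V, ∃ x : V × Bool, w ∈ C \ Cstar →
        x ∈ (Cstar ×ˢ (Set.univ : Set Bool)) ∧
        ∃ e ∈ M, x ∈ e ∧ ∃ b : Bool, (w, b) ∈ e := by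
      intro w
      by_cases hw : w ∈ C \ Cstar
      case neg => exact ⟨(w, true), fun h => absurd h hw⟩
      case pos =>
        obtain ⟨⟨e, heM, hwe⟩, hwC⟩ := hw
        obtain ⟨b, hwb⟩ : ∃ b, ((w, b) : V × Bool) ∈ e := by
          rcases hwe with h | h
          exacts [⟨true, h⟩, ⟨false, h⟩]
        obtain ⟨p, q, rfl⟩ := sym2_rep e
        have heE := hMsub heM
        rw [SimpleGraph.mem_edgeSet, hH] at heE
        rw [Sym2.mem_iff] at hwb
        rcases hwb with h | h
        · refine ⟨q, fun _ => ⟨⟨?_, trivial⟩, s(p, q), heM, Sym2.mem_mk_right _ _,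
            b, by rw [h]; exact Sym2.mem_mk_left _ _⟩⟩
          have hadj : G.Adj w q.1 := by rw [← h] at heE; exact heE.1
          rcases hCstar _ _ hadj with h1 | h1
          · exact absurd h1 hwC
          · exact h1
        · refine ⟨p, fun _ => ⟨⟨?_, trivial⟩, s(p, q), heM, Sym2.mem_mk_left _ _,
            b, by rw [h]; exact Sym2.mem_mk_right _ _⟩⟩
          have hadj : G.Adj p.1 w := by rw [← h] at heE; exact heE.1
          rcases hCstar _ _ hadj with h1 | h1
          · exact h1
          · exact absurd h1 hwC
    choose f hf using key
    have hmaps : ∀ w ∈ C \ Cstar, f w ∈ (Cstar ×ˢ (Set.univ : Set Bool)) :=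
      fun w hw => (hf w hw).1
    have hinj : Set.InjOn f (C \ Cstar) := by
      intro w hw w' hw' hfe
      obtain ⟨⟨hx1, _⟩, e, heM, hxe, b, hwb⟩ := hf w hw
      obtain ⟨⟨hx1', _⟩, e', heM', hxe', b', hwb'⟩ := hf w' hw'
      rw [hfe] at hxe
      have hee : e = e' := by
        by_contra hne
        exact hMatch e heM e' heM' hne _ hxe hxe'
      subst hee
      obtain ⟨p, q, rfl⟩ := sym2_rep e
      rw [Sym2.mem_iff] at hxe hwb hwb'
      have hwne : (w, b) ≠ f w' := fun h => hw.2 (by rw [← h] at hx1'; exact hx1')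
      have hwne' : (w', b') ≠ f w' := fun h => hw'.2 (by rw [← h] at hx1'; exact hx1')
      rcases hxe with hx | hx
      · -- f w' = p, so both (w,b) and (w',b') must be q
        have h1 : (w, b) = q := by
          rcases hwb with h | h
          · exact absurd (h.trans hx.symm) hwne
          · exact h
        have h2 : (w', b') = q := by
          rcases hwb' with h | h
          · exact absurd (h.trans hx.symm) hwne'
          · exact h
        exact congrArg Prod.fst (h1.trans h2.symm)
      · have h1 : (w, b) = p := by
          rcases hwb with h | h
          · exact h
          · exact absurd (h.trans hx.symm) hwne
        have h2 : (w', b') = p := by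
          rcases hwb' with h | h
          · exact h
          · exact absurd (h.trans hx.symm) hwne'
        exact congrArg Prod.fst (h1.trans h2.symm)
    have h1 : (C \ Cstar).ncard ≤ (Cstar ×ˢ (Set.univ : Set Bool)).ncard :=
      Set.ncard_le_ncard_of_injOn f hmaps hinj (Set.toFinite _)
    have h2 : (Cstar ×ˢ (Set.univ : Set Bool)).ncard = 2 * Cstar.ncard := by
      rw [Set.ncard_eq_toFinset_card', Set.ncard_eq_toFinset_card']
      simp [Set.toFinset_prod, mul_comm]
    have h3 : (C ∩ Cstar).ncard ≤ Cstar.ncard :=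
      Set.ncard_le_ncard Set.inter_subset_right (Set.toFinite _)
    have h4 : (C ∩ Cstar).ncard + (C \ Cstar).ncard = C.ncard :=
      Set.ncard_inter_add_ncard_diff_eq_ncard C Cstar (Set.toFinite _)
    omega
end
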